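/- Let p be a prime with p ≡ 1 (mod 5), set t = (p−1)/5, and let T be a generator of the group of characters on 𝔽_p. Then Σ_{e=0}^{p−2} G_{−e+t} · G_{−e+2t} · G_{−e+3t} · G_{−e+4t} · G_{−e} · G_{e} · G_{e+t} · G_{e+2t} · G_{e+3t} · G_{e+4t} · T^{−5e}(−1) = p^4 · (p−1) · (p−5). -/

import Mathlib

open Finset

/-- The standard additive character `θ(a) = e^{2πia/p}` on `𝔽_p`. -/
noncomputable def theta (p : ℕ) (a : ZMod p) : ℂ :=
  Complex.exp (2 * Real.pi * Complex.I * (ZMod.val a : ℂ) / (p : ℂ))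

/-- The Gauss sum `G(χ) = ∑_{x ∈ 𝔽_p} χ(x) θ(x)`. -/
noncomputable def gaussS (p : ℕ) [NeZero p] (χ : MulChar (ZMod p) ℂ) : ℂ :=
  ∑ x : ZMod p, χ x * theta p x

/-- The generalized Jacobi sum `J(χ₁,χ₂,χ₃) = ∑_{t₁+t₂+t₃=1} χ₁(t₁)χ₂(t₂)χ₃(t₃)`. -/
noncomputable def jacobi3 (p : ℕ) [NeZero p] (χ₁ χ₂ χ₃ : MulChar (ZMod p) ℂ) : ℂ :=
  ∑ v ∈ Finset.univ.filter (fun v : ZMod p × ZMod p × ZMod p => v.1 + v.2.1 + v.2.2 = 1),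
    χ₁ v.1 * χ₂ v.2.1 * χ₃ v.2.2

/-!
Write `χ = T^e` and `ω = T^t`, a character of order 5. Since `ω⁵ = 1`, the ten Gauss sums in
the `e`-th term pair off as `G(ψ) G(ψ⁻¹)` with `ψ = χ⁻¹ωʲ`, `j < 5`, and `G(ψ) G(ψ⁻¹)` is
`ψ(-1) p`, or `ψ(-1)` when `ψ` is trivial. The signs multiply to `χ(-1)¹⁰ = 1`, so the term is
`p⁵`, divided by `p` when `χ` is one of the five powers of `ω`, i.e. when `t ∣ e`. Summing gives
`5 p⁴ + (p - 6) p⁵`.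
-/

theorem sum_range_mul_prod_ite_eq_mul {R : Type*} [CommSemiring R] (n t : ℕ) (ht : 0 < t) (a : R) :
    ∑ e ∈ range (n * t), ∏ j ∈ range n, (if e = t * j then 1 else a) =
      n * a ^ (n - 1) + ((n * t - n : ℕ) : R) * a ^ n := by
  set S := (range n).image (t * ·)
  have hS : S ⊆ range (n * t) := by
    intro e he
    obtain ⟨k, hk, rfl⟩ := mem_image.mp he
    rw [mem_range] at hk ⊢
    nlinarith
  have hSn : #S = n := by
    rw [card_image_of_injective _ (mul_right_injective₀ ht.ne'), card_range]
  have hterm (e : ℕ) : ∏ j ∈ range n, (if e = t * j then 1 else a) =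
      if e ∈ S then a ^ (n - 1) else a ^ n := by
    split_ifs with he
    · obtain ⟨k, hk, rfl⟩ := mem_image.mp he
      rw [prod_ite, prod_const_one, one_mul, prod_const]
      simp only [mul_right_inj' ht.ne', ← ne_eq, filter_ne, card_erase_of_mem hk, card_range]
    · refine (prod_congr rfl fun j hj => if_neg fun hej => he ?_).trans ?_
      · exact mem_image.mpr ⟨j, hj, hej.symm⟩
      · rw [prod_const, card_range]
  rw [sum_congr rfl fun e _ => hterm e, sum_ite, filter_mem_eq_inter, inter_eq_right.mpr hS,
    filter_not, filter_mem_eq_inter, inter_eq_right.mpr hS, sum_const, sum_const,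
    card_sdiff_of_subset hS, hSn, card_range, nsmul_eq_mul, nsmul_eq_mul]

section GaussSums

variable (p : ℕ) [Fact p.Prime]

theorem theta_eq_stdAddChar (a : ZMod p) : theta p a = ZMod.stdAddChar a := by
  rw [ZMod.stdAddChar_apply, ZMod.toCircle_apply]
  rfl

theorem gaussS_eq_gaussSum (χ : MulChar (ZMod p) ℂ) :
    gaussS p χ = gaussSum χ ZMod.stdAddChar := by
  simp only [gaussS, gaussSum, theta_eq_stdAddChar]

theorem gaussS_one : gaussS p 1 = -1 := by
  rw [gaussS_eq_gaussSum, gaussSum_one_left]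
  simpa using ZMod.isPrimitive_stdAddChar p one_ne_zero

theorem gaussS_mul_gaussS_inv (χ : MulChar (ZMod p) ℂ) :
    gaussS p χ * gaussS p χ⁻¹ = χ (-1) * if χ = 1 then 1 else (p : ℂ) := by
  split_ifs with hχ
  · simp [hχ, gaussS_one, MulChar.one_apply (isUnit_one.neg)]
  · rw [gaussS_eq_gaussSum, gaussS_eq_gaussSum, ← mul_gaussSum_inv_eq_gaussSum χ⁻¹,
      MulChar.inv_apply', inv_neg_one, mul_left_comm,
      gaussSum_mul_gaussSum_eq_card hχ (ZMod.isPrimitive_stdAddChar p), ZMod.card]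

theorem gaussS_prod_cosets (χ ω : MulChar (ZMod p) ℂ) (hω : ω ^ 5 = 1) :
    gaussS p (χ⁻¹ * ω) * gaussS p (χ⁻¹ * ω ^ 2) * gaussS p (χ⁻¹ * ω ^ 3) *
        gaussS p (χ⁻¹ * ω ^ 4) * gaussS p χ⁻¹ * gaussS p χ * gaussS p (χ * ω) *
        gaussS p (χ * ω ^ 2) * gaussS p (χ * ω ^ 3) * gaussS p (χ * ω ^ 4) * (χ ^ 5)⁻¹ (-1) =
      ∏ j ∈ range 5, if χ = ω ^ j then 1 else (p : ℂ) := by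
  have pair (i j : ℕ) (hij : i + j = 5) : χ * ω ^ i = (χ⁻¹ * ω ^ j)⁻¹ := by
    rw [mul_inv, inv_inv, eq_inv_of_mul_eq_one_left (a := ω ^ i) (by rw [← pow_add, hij, hω])]
  have pair₀ : gaussS p χ⁻¹ * gaussS p χ = χ⁻¹ (-1) * if χ⁻¹ = 1 then 1 else (p : ℂ) := by
    simpa only [inv_inv] using gaussS_mul_gaussS_inv p χ⁻¹
  have hω₁ : ω (-1) = 1 := MulChar.val_neg_one_eq_one_of_odd_order (by decide) hω
  have hχ₁₀ : χ (-1) ^ 10 = 1 := by rw [pow_mul _ 2 5, ← map_pow, neg_one_sq, map_one, one_pow]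
  rw [(pow_one ω ▸ pair 1 4 rfl : χ * ω = _), pair 2 3 rfl, pair 3 2 rfl, pair 4 1 rfl, pow_one]
  calc _ = (gaussS p (χ⁻¹ * ω) * gaussS p (χ⁻¹ * ω)⁻¹) *
        (gaussS p (χ⁻¹ * ω ^ 2) * gaussS p (χ⁻¹ * ω ^ 2)⁻¹) *
        (gaussS p (χ⁻¹ * ω ^ 3) * gaussS p (χ⁻¹ * ω ^ 3)⁻¹) *
        (gaussS p (χ⁻¹ * ω ^ 4) * gaussS p (χ⁻¹ * ω ^ 4)⁻¹) *
        (gaussS p χ⁻¹ * gaussS p χ) * (χ ^ 5)⁻¹ (-1) := by ring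
    _ = _ := by
      simp only [gaussS_mul_gaussS_inv, pair₀, inv_mul_eq_one, inv_eq_one, MulChar.mul_apply,
        MulChar.inv_apply', inv_neg_one, MulChar.pow_apply', hω₁, one_pow, pow_one,
        prod_range_succ, prod_range_zero, pow_zero, ne_eq, OfNat.ofNat_ne_zero, not_false_eq_true]
      ring_nf
      rw [hχ₁₀, one_mul]

end GaussSums

theorem orderOf_eq_of_forall_eq_pow {p : ℕ} [Fact p.Prime] {T : MulChar (ZMod p) ℂ}
    (hT : ∀ χ : MulChar (ZMod p) ℂ, ∃ n : ℕ, χ = T ^ n) : orderOf T = p - 1 := by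
  have : Fintype (MulChar (ZMod p) ℂ) := Fintype.ofFinite _
  rw [orderOf_eq_card_of_forall_mem_zpowers fun χ => ?_,
    MulChar.card_eq_card_units_of_hasEnoughRootsOfUnity, Nat.card_eq_fintype_card, ZMod.card_units]
  obtain ⟨n, rfl⟩ := hT χ
  exact Subgroup.npow_mem_zpowers T n

/-- Evaluation of `D₁` (proof of Theorem 5.1 of McCarthy). -/
theorem gauss_D1_sum (p : ℕ) [Fact p.Prime] (hp : p % 5 = 1)
    (t : ℕ) (ht : t = (p - 1) / 5)
    (T : MulChar (ZMod p) ℂ) (hT : ∀ χ : MulChar (ZMod p) ℂ, ∃ n : ℕ, χ = T ^ n) :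
    ∑ e ∈ Finset.range (p - 1),
      gaussS p (T ^ (-(e : ℤ) + t)) * gaussS p (T ^ (-(e : ℤ) + 2 * t)) *
        gaussS p (T ^ (-(e : ℤ) + 3 * t)) * gaussS p (T ^ (-(e : ℤ) + 4 * t)) *
        gaussS p (T ^ (-(e : ℤ))) * gaussS p (T ^ e) * gaussS p (T ^ (e + t)) *
        gaussS p (T ^ (e + 2 * t)) * gaussS p (T ^ (e + 3 * t)) * gaussS p (T ^ (e + 4 * t)) *
        (T ^ (-5 * (e : ℤ))) (-1 : ZMod p) =
    (p : ℂ) ^ 4 * ((p : ℂ) - 1) * ((p : ℂ) - 5) := by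
  have hp₆ : 6 ≤ p := by have := (Fact.out : p.Prime).two_le; omega
  have h5t : p - 1 = 5 * t := by omega
  have ht₀ : 0 < t := by omega
  have hord : orderOf T = 5 * t := h5t ▸ orderOf_eq_of_forall_eq_pow hT
  have hω : (T ^ t) ^ 5 = 1 := by rw [← pow_mul, mul_comm, ← hord, pow_orderOf_eq_one]
  rw [h5t]
  trans ∑ e ∈ range (5 * t), ∏ j ∈ range 5, if e = t * j then 1 else (p : ℂ)
  · refine sum_congr rfl fun e he => ?_
    have hpow (j : ℕ) (hj : j ∈ range 5) : T ^ e = (T ^ t) ^ j ↔ e = t * j := by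
      have := mem_range.mp hj
      rw [← pow_mul, pow_inj_mod, hord, Nat.mod_eq_of_lt (mem_range.mp he),
        Nat.mod_eq_of_lt (by nlinarith)]
    rw [← prod_congr rfl fun j hj => if_congr (hpow j hj) rfl rfl, ← gaussS_prod_cosets p _ _ hω]
    simp only [zpow_add, zpow_neg, zpow_natCast, zpow_mul', pow_add, pow_mul', zpow_ofNat]
  · rw [sum_range_mul_prod_ite_eq_mul 5 t ht₀, show 5 * t - 5 = p - 6 by omega,
      Nat.cast_sub hp₆]
    push_cast
    ring
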